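/- Under the standing hypotheses (including the additional ones for the degree-two maps), set m₂^{V⊙W,+0_W} := m₂^{W,+0}∘(𝐛₁^V⊗𝐛₁^V) + m₁^{W,+0}∘b₁^V∘Δ₂^W∘(𝐛₁^V⊗𝐛₁^V) + m₁^{W,+0}∘b₂^V∘(𝚫₁^W⊗𝚫₁^W) : X⊗X → P (the P-valued component of m₂^{V⊙W}) and m₁^{V⊙W,+0_W} := m₁^{W,+0}∘𝐛₁^V : X → P. Then m₂^{V⊙W,+0_W}∘(m₁^{V⊙W}⊗id_X) + m₂^{V⊙W,+0_W}∘(id_X⊗m₁^{V⊙W}) + m₁^{V⊙W,+0_W}∘m₂^{V⊙W} = 0 as maps X⊗X → P. Together with the companion identity for the Q-valued components, this says that m₂^{V⊙W} satisfies the Leibniz rule with respect to m₁^{V⊙W}. (Equation (34) of the paper, Section 6.2.) -/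

import Mathlib

open TensorProduct

namespace LegoutStmt5

variable {P Q C C' : Type*}
  [AddCommGroup P] [Module (ZMod 2) P]
  [AddCommGroup Q] [Module (ZMod 2) Q]
  [AddCommGroup C] [Module (ZMod 2) C]
  [AddCommGroup C'] [Module (ZMod 2) C']

/-- `𝚫₁^W : X = P ⊕ Q → Z = C′ ⊕ Q`, `p + q ↦ Δ₁^W(p) + q`. -/
def boldDelta1W (Δ1W : P →ₗ[ZMod 2] C') : (P × Q) →ₗ[ZMod 2] C' × Q :=
  LinearMap.prod (Δ1W ∘ₗ LinearMap.fst (ZMod 2) P Q) (LinearMap.snd (ZMod 2) P Q)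

/-- `𝐛₁^V : X → Y = P ⊕ C`, `p + q ↦ p + b₁^V(Δ₁^W(p)) + b₁^V(q)`. -/
def boldB1V (Δ1W : P →ₗ[ZMod 2] C') (b1V : (C' × Q) →ₗ[ZMod 2] C) :
    (P × Q) →ₗ[ZMod 2] P × C :=
  LinearMap.prod (LinearMap.fst (ZMod 2) P Q) (b1V ∘ₗ boldDelta1W Δ1W)

/-- `𝚫₁^{W⊂W} : Y → 𝔠 = C′ ⊕ C`, `p + c ↦ Δ₁^W(p) + c`. -/
def delta1WW (Δ1W : P →ₗ[ZMod 2] C') : (P × C) →ₗ[ZMod 2] C' × C :=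
  LinearMap.prod (Δ1W ∘ₗ LinearMap.fst (ZMod 2) P C) (LinearMap.snd (ZMod 2) P C)

/-- `𝐛₁^{V⊂V} : Z → 𝔠`, `c′ + q ↦ c′ + b₁^V(c′) + b₁^V(q)`. -/
def b1VV (b1V : (C' × Q) →ₗ[ZMod 2] C) : (C' × Q) →ₗ[ZMod 2] C' × C :=
  LinearMap.prod (LinearMap.fst (ZMod 2) C' Q) b1V

/-- `m₁^{V⊙W} := m₁^{W,+0}∘𝐛₁^V + m₁^{V,0−}∘𝚫₁^W : X → X`. -/
def m1VoW (mW0 : (P × C) →ₗ[ZMod 2] P) (mV0 : (C' × Q) →ₗ[ZMod 2] Q)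
    (Δ1W : P →ₗ[ZMod 2] C') (b1V : (C' × Q) →ₗ[ZMod 2] C) :
    (P × Q) →ₗ[ZMod 2] P × Q :=
  LinearMap.prod (mW0 ∘ₗ boldB1V Δ1W b1V) (mV0 ∘ₗ boldDelta1W Δ1W)

/-- The `P`-valued component `m₂^{V⊙W,+0_W}` of `m₂^{V⊙W}`:
`m₂^{W,+0}∘(𝐛₁^V⊗𝐛₁^V) + m₁^{W,+0}∘b₁^V∘Δ₂^W∘(𝐛₁^V⊗𝐛₁^V) + m₁^{W,+0}∘b₂^V∘(𝚫₁^W⊗𝚫₁^W)`. -/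
noncomputable def m2PComp (mW0 : (P × C) →ₗ[ZMod 2] P)
    (Δ1W : P →ₗ[ZMod 2] C') (b1V : (C' × Q) →ₗ[ZMod 2] C)
    (m2W0 : ((P × C) ⊗[ZMod 2] (P × C)) →ₗ[ZMod 2] P)
    (Δ2W : ((P × C) ⊗[ZMod 2] (P × C)) →ₗ[ZMod 2] C')
    (b2V : ((C' × Q) ⊗[ZMod 2] (C' × Q)) →ₗ[ZMod 2] C) :
    ((P × Q) ⊗[ZMod 2] (P × Q)) →ₗ[ZMod 2] P :=
  m2W0 ∘ₗ TensorProduct.map (boldB1V Δ1W b1V) (boldB1V Δ1W b1V)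
    + mW0 ∘ₗ LinearMap.inr (ZMod 2) P C ∘ₗ b1V ∘ₗ LinearMap.inl (ZMod 2) C' Q ∘ₗ Δ2W
        ∘ₗ TensorProduct.map (boldB1V Δ1W b1V) (boldB1V Δ1W b1V)
    + mW0 ∘ₗ LinearMap.inr (ZMod 2) P C ∘ₗ b2V
        ∘ₗ TensorProduct.map (boldDelta1W Δ1W) (boldDelta1W Δ1W)

/-- The `Q`-valued component `m₂^{V⊙W,0_V−}` of `m₂^{V⊙W}`:
`m₂^{V,0−}∘(𝚫₁^W⊗𝚫₁^W) + m₁^{V,0−}∘Δ₂^W∘(𝐛₁^V⊗𝐛₁^V)`. -/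
noncomputable def m2QComp (mV0 : (C' × Q) →ₗ[ZMod 2] Q)
    (Δ1W : P →ₗ[ZMod 2] C') (b1V : (C' × Q) →ₗ[ZMod 2] C)
    (m2V0 : ((C' × Q) ⊗[ZMod 2] (C' × Q)) →ₗ[ZMod 2] Q)
    (Δ2W : ((P × C) ⊗[ZMod 2] (P × C)) →ₗ[ZMod 2] C') :
    ((P × Q) ⊗[ZMod 2] (P × Q)) →ₗ[ZMod 2] Q :=
  m2V0 ∘ₗ TensorProduct.map (boldDelta1W Δ1W) (boldDelta1W Δ1W)
    + mV0 ∘ₗ LinearMap.inl (ZMod 2) C' Q ∘ₗ Δ2W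
        ∘ₗ TensorProduct.map (boldB1V Δ1W b1V) (boldB1V Δ1W b1V)

/-- `m₂^{V⊙W} : X ⊗ X → X`. -/
noncomputable def m2VoW (mW0 : (P × C) →ₗ[ZMod 2] P) (mV0 : (C' × Q) →ₗ[ZMod 2] Q)
    (Δ1W : P →ₗ[ZMod 2] C') (b1V : (C' × Q) →ₗ[ZMod 2] C)
    (m2W0 : ((P × C) ⊗[ZMod 2] (P × C)) →ₗ[ZMod 2] P)
    (m2V0 : ((C' × Q) ⊗[ZMod 2] (C' × Q)) →ₗ[ZMod 2] Q)
    (Δ2W : ((P × C) ⊗[ZMod 2] (P × C)) →ₗ[ZMod 2] C')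
    (b2V : ((C' × Q) ⊗[ZMod 2] (C' × Q)) →ₗ[ZMod 2] C) :
    ((P × Q) ⊗[ZMod 2] (P × Q)) →ₗ[ZMod 2] P × Q :=
  LinearMap.prod (m2PComp mW0 Δ1W b1V m2W0 Δ2W b2V) (m2QComp mV0 Δ1W b1V m2V0 Δ2W)


section Helpers
variable {M : Type*} [AddCommGroup M] [Module (ZMod 2) M]

lemma two_eq_zero (a : M) : a + a = 0 := by
  have h : (2 : ZMod 2) • a = 0 := by
    rw [show (2 : ZMod 2) = 0 from rfl, zero_smul]
  rwa [two_smul] at h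

lemma zsmul_two (a : M) : (2 : ℤ) • a = 0 := by
  rw [two_zsmul]; exact two_eq_zero a

lemma nsmul_two (a : M) : (2 : ℕ) • a = 0 := by
  rw [two_nsmul]; exact two_eq_zero a

lemma negid (a : M) : -a = a := by rw [neg_eq_iff_add_eq_zero]; exact two_eq_zero a

variable {A B : Type*} [AddCommGroup A] [Module (ZMod 2) A] [AddCommGroup B] [Module (ZMod 2) B]

/-- full split of a pair application -/
lemma psplit1 (f : (A × B) →ₗ[ZMod 2] M) (a : A) (b : B) :
    f (a, b) = f (a, 0) + f (0, b) := by
  rw [← map_add, Prod.mk_add_mk, add_zero, zero_add]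

/-- split a sum in the first component -/
lemma qsplit (f : (A × B) →ₗ[ZMod 2] M) (a a' : A) (b : B) :
    f (a + a', b) = f (a, b) + f (a', 0) := by
  rw [← map_add, Prod.mk_add_mk, add_zero]

/-- split a sum in the second component -/
lemma psplitR (f : (A × B) →ₗ[ZMod 2] M) (a : A) (b b' : B) :
    f (a, b + b') = f (a, b) + f (0, b') := by
  rw [← map_add, Prod.mk_add_mk, add_zero]

end Helpers

set_option maxHeartbeats 1000000 in
/-- Equation (34) of Legout, Section 6.2: the `P`-valued (i.e. `+0_W`) component of the
Leibniz rule for `m₂^{V⊙W}` with respect to `m₁^{V⊙W}`. -/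
theorem leibniz_P_component
    (mW0 : (P × C) →ₗ[ZMod 2] P) (mWm : (P × C) →ₗ[ZMod 2] C)
    (mVp : (C' × Q) →ₗ[ZMod 2] C') (mV0 : (C' × Q) →ₗ[ZMod 2] Q)
    (Δ1W : P →ₗ[ZMod 2] C') (b1V : (C' × Q) →ₗ[ZMod 2] C)
    (Δ1L : C' →ₗ[ZMod 2] C') (b1L : (C' × C) →ₗ[ZMod 2] C)
    (m2W0 : ((P × C) ⊗[ZMod 2] (P × C)) →ₗ[ZMod 2] P)
    (m2Wm : ((P × C) ⊗[ZMod 2] (P × C)) →ₗ[ZMod 2] C)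
    (m2Vp : ((C' × Q) ⊗[ZMod 2] (C' × Q)) →ₗ[ZMod 2] C')
    (m2V0 : ((C' × Q) ⊗[ZMod 2] (C' × Q)) →ₗ[ZMod 2] Q)
    (Δ2W : ((P × C) ⊗[ZMod 2] (P × C)) →ₗ[ZMod 2] C')
    (b2V : ((C' × Q) ⊗[ZMod 2] (C' × Q)) →ₗ[ZMod 2] C)
    (Δ2L : ((C' × C) ⊗[ZMod 2] (C' × C)) →ₗ[ZMod 2] C')
    (b2L : ((C' × C) ⊗[ZMod 2] (C' × C)) →ₗ[ZMod 2] C)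
    -- (D1) m₁^W ∘ m₁^W = 0
    (hD1 : (LinearMap.prod mW0 mWm) ∘ₗ (LinearMap.prod mW0 mWm) = 0)
    -- (D2) m₁^V ∘ m₁^V = 0
    (hD2 : (LinearMap.prod mVp mV0) ∘ₗ (LinearMap.prod mVp mV0) = 0)
    -- (S1) m₁^{W,−} = b₁^Λ ∘ 𝚫₁^{W⊂W}
    (hS1 : mWm = b1L ∘ₗ delta1WW Δ1W)
    -- (S2) m₁^{V,+} = Δ₁^Λ ∘ π_{C′}
    (hS2 : mVp = Δ1L ∘ₗ LinearMap.fst (ZMod 2) C' Q)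
    -- (R1) Δ₁^W ∘ m₁^{W,+0} = Δ₁^Λ ∘ Δ₁^W ∘ π_P
    (hR1 : Δ1W ∘ₗ mW0 = (Δ1L ∘ₗ Δ1W) ∘ₗ LinearMap.fst (ZMod 2) P C)
    -- (R2) b₁^V ∘ m₁^V = b₁^Λ ∘ 𝐛₁^{V⊂V}
    (hR2 : b1V ∘ₗ (LinearMap.prod mVp mV0) = b1L ∘ₗ b1VV b1V)
    -- (L1)
    (hL1 : m2W0 ∘ₗ LinearMap.rTensor (P × C) (LinearMap.prod mW0 mWm)
      + m2W0 ∘ₗ LinearMap.lTensor (P × C) (LinearMap.prod mW0 mWm)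
      + mW0 ∘ₗ LinearMap.prod m2W0 m2Wm = 0)
    -- (L2)
    (hL2 : m2V0 ∘ₗ LinearMap.rTensor (C' × Q) (LinearMap.prod mVp mV0)
      + m2V0 ∘ₗ LinearMap.lTensor (C' × Q) (LinearMap.prod mVp mV0)
      + mV0 ∘ₗ LinearMap.prod m2Vp m2V0 = 0)
    -- (L3)
    (hL3 : Δ2W ∘ₗ LinearMap.rTensor (P × C) (LinearMap.prod mW0 mWm)
      + Δ2W ∘ₗ LinearMap.lTensor (P × C) (LinearMap.prod mW0 mWm)
      + Δ1W ∘ₗ m2W0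
      + Δ2L ∘ₗ TensorProduct.map (delta1WW Δ1W) (delta1WW Δ1W)
      + Δ1L ∘ₗ Δ2W = 0)
    -- (L4)
    (hL4 : b2V ∘ₗ LinearMap.rTensor (C' × Q) (LinearMap.prod mVp mV0)
      + b2V ∘ₗ LinearMap.lTensor (C' × Q) (LinearMap.prod mVp mV0)
      + b1V ∘ₗ LinearMap.prod m2Vp m2V0
      + b2L ∘ₗ TensorProduct.map (b1VV b1V) (b1VV b1V)
      + b1L ∘ₗ LinearMap.inr (ZMod 2) C' C ∘ₗ b2V = 0)
    -- (S1′)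
    (hS1' : m2Wm = b1L ∘ₗ LinearMap.inl (ZMod 2) C' C ∘ₗ Δ2W
      + b2L ∘ₗ TensorProduct.map (delta1WW Δ1W) (delta1WW Δ1W))
    -- (S2′)
    (hS2' : m2Vp = Δ2L ∘ₗ TensorProduct.map (b1VV b1V) (b1VV b1V)) :
    (m2PComp mW0 Δ1W b1V m2W0 Δ2W b2V)
        ∘ₗ LinearMap.rTensor (P × Q) (m1VoW mW0 mV0 Δ1W b1V)
      + (m2PComp mW0 Δ1W b1V m2W0 Δ2W b2V)
        ∘ₗ LinearMap.lTensor (P × Q) (m1VoW mW0 mV0 Δ1W b1V)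
      + (mW0 ∘ₗ boldB1V Δ1W b1V) ∘ₗ (m2VoW mW0 mV0 Δ1W b1V m2W0 m2V0 Δ2W b2V) = 0 := by

  -- map-level auxiliary identities
  have eqC : delta1WW Δ1W ∘ₗ boldB1V Δ1W b1V = b1VV b1V ∘ₗ boldDelta1W Δ1W := by
    apply LinearMap.ext; rintro ⟨p, q⟩
    simp [delta1WW, boldB1V, b1VV, boldDelta1W]
  have eqB : boldDelta1W Δ1W ∘ₗ m1VoW mW0 mV0 Δ1W b1V
      = (LinearMap.prod mVp mV0) ∘ₗ boldDelta1W Δ1W := by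
    apply LinearMap.ext; rintro ⟨p, q⟩
    have h1 := LinearMap.congr_fun hR1 ((p, b1V (Δ1W p, q)) : P × C)
    have h2 := LinearMap.congr_fun hS2 ((Δ1W p, q) : C' × Q)
    simp [boldDelta1W, m1VoW, boldB1V] at h1 h2 ⊢
    rw [h1, h2]
  have eqA : boldB1V Δ1W b1V ∘ₗ m1VoW mW0 mV0 Δ1W b1V
      = (LinearMap.prod mW0 mWm) ∘ₗ boldB1V Δ1W b1V := by
    apply LinearMap.ext; intro x
    have h1 := LinearMap.congr_fun eqB x
    have h2 := LinearMap.congr_fun hR2 (boldDelta1W Δ1W x)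
    have h3 := LinearMap.congr_fun eqC x
    simp only [LinearMap.comp_apply] at h1 h2 h3
    simp only [LinearMap.comp_apply, LinearMap.prod_apply, Function.prod, boldB1V, hS1]
    refine Prod.ext rfl ?_
    simp only [LinearMap.prod_apply, Function.prod, LinearMap.comp_apply, LinearMap.fst_apply]
    rw [show (boldDelta1W Δ1W) ((m1VoW mW0 mV0 Δ1W b1V) x) = (LinearMap.prod mVp mV0) (boldDelta1W Δ1W x) from h1, h2, ← h3]
    rfl
  have hAx := LinearMap.congr_fun eqA
  have hBx := LinearMap.congr_fun eqB
  simp only [LinearMap.comp_apply] at hAx hBx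
  apply TensorProduct.ext'
  intro x y
  simp only [m2PComp, m2VoW, m2QComp, LinearMap.add_apply, LinearMap.comp_apply,
    LinearMap.rTensor_tmul, LinearMap.lTensor_tmul, TensorProduct.map_tmul,
    LinearMap.prod_apply, Function.prod, LinearMap.inl_apply, LinearMap.inr_apply,
    LinearMap.zero_apply]
  rw [hAx x, hAx y, hBx x, hBx y]




  set bx := boldB1V Δ1W b1V x with hbx
  set by' := boldB1V Δ1W b1V y with hby
  set dx := boldDelta1W Δ1W x with hdx
  set dy := boldDelta1W Δ1W y with hdy
  have hBapp : ∀ (a : P) (b : Q), boldB1V Δ1W b1V (a, b) = (a, b1V (Δ1W a, b)) := by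
    intro a b; simp [boldB1V, boldDelta1W]
  rw [hBapp]
  have hr0 : ∀ c : C, Δ1W (mW0 (0, c)) = 0 := by
    intro c
    have h := LinearMap.congr_fun hR1 ((0, c) : P × C)
    simpa using h
  rw [show Δ1W (m2W0 (bx ⊗ₜ[ZMod 2] by') + mW0 (0, b1V (Δ2W (bx ⊗ₜ[ZMod 2] by'), 0))
        + mW0 (0, b2V (dx ⊗ₜ[ZMod 2] dy))) = Δ1W (m2W0 (bx ⊗ₜ[ZMod 2] by')) from by
    rw [map_add, map_add, hr0, hr0, add_zero, add_zero]]
  simp only [qsplit, psplitR]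
  rw [psplit1 b1V (Δ1W (m2W0 (bx ⊗ₜ[ZMod 2] by'))) (m2V0 (dx ⊗ₜ[ZMod 2] dy))]
  simp only [psplitR]
  rw [psplit1 mW0 (m2W0 (bx ⊗ₜ[ZMod 2] by')) (b1V (Δ1W (m2W0 (bx ⊗ₜ[ZMod 2] by')), 0))]

  -- the D1 trick: mW0 (mW0 (0,c), 0) = mW0 (0, b1L (0,c))
  have hDtrick : ∀ c : C, mW0 (mW0 (0, c), 0) = mW0 (0, b1L (0, c)) := by
    intro c
    have h := LinearMap.congr_fun hD1 ((0, c) : P × C)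
    simp only [LinearMap.comp_apply, LinearMap.prod_apply, Function.prod, LinearMap.zero_apply] at h
    have h1 : mW0 (mW0 (0, c), mWm (0, c)) = 0 := congrArg Prod.fst h
    rw [psplit1 mW0 (mW0 (0, c)) (mWm (0, c)), add_eq_zero_iff_eq_neg, negid] at h1
    rw [h1, hS1]
    simp [delta1WW]
  simp only [hDtrick]
  -- elementwise eqC
  have hCx : delta1WW Δ1W bx = b1VV b1V dx := by
    rw [hbx, hdx, ← LinearMap.comp_apply, eqC, LinearMap.comp_apply]
  have hCy : delta1WW Δ1W by' = b1VV b1V dy := by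
    rw [hby, hdy, ← LinearMap.comp_apply, eqC, LinearMap.comp_apply]
  -- instance of L1
  have a1 := LinearMap.congr_fun hL1 (bx ⊗ₜ[ZMod 2] by')
  simp only [LinearMap.add_apply, LinearMap.comp_apply, LinearMap.rTensor_tmul,
    LinearMap.lTensor_tmul, LinearMap.prod_apply, Function.prod, LinearMap.zero_apply] at a1
  have hm : m2Wm (bx ⊗ₜ[ZMod 2] by')
      = b1L (Δ2W (bx ⊗ₜ[ZMod 2] by'), 0)
        + b2L ((b1VV b1V) dx ⊗ₜ[ZMod 2] (b1VV b1V) dy) := by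
    rw [hS1']
    simp only [LinearMap.add_apply, LinearMap.comp_apply, TensorProduct.map_tmul,
      LinearMap.inl_apply]
    rw [hCx, hCy]
  rw [hm, psplitR mW0 (m2W0 (bx ⊗ₜ[ZMod 2] by')) (b1L (Δ2W (bx ⊗ₜ[ZMod 2] by'), 0))
        (b2L ((b1VV b1V) dx ⊗ₜ[ZMod 2] (b1VV b1V) dy)),
      psplit1 mW0 (m2W0 (bx ⊗ₜ[ZMod 2] by')) (b1L (Δ2W (bx ⊗ₜ[ZMod 2] by'), 0))] at a1
  -- instance of L3, pushed into P via mW0 (0, b1V (·, 0))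
  have a3 := LinearMap.congr_fun hL3 (bx ⊗ₜ[ZMod 2] by')
  simp only [LinearMap.add_apply, LinearMap.comp_apply, LinearMap.rTensor_tmul,
    LinearMap.lTensor_tmul, TensorProduct.map_tmul, LinearMap.zero_apply] at a3
  rw [hCx, hCy] at a3
  have b3 := congrArg (fun c' : C' => mW0 ((0 : P), b1V (c', (0 : Q)))) a3
  simp only [qsplit, psplitR, Prod.mk_zero_zero, map_zero] at b3
  -- instance of L4, pushed into P via mW0 (0, ·)
  have a4 := LinearMap.congr_fun hL4 (dx ⊗ₜ[ZMod 2] dy)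
  simp only [LinearMap.add_apply, LinearMap.comp_apply, LinearMap.rTensor_tmul,
    LinearMap.lTensor_tmul, TensorProduct.map_tmul, LinearMap.prod_apply, Function.prod,
    LinearMap.inr_apply, LinearMap.zero_apply, hS2'] at a4
  rw [psplit1 b1V (Δ2L ((b1VV b1V) dx ⊗ₜ[ZMod 2] (b1VV b1V) dy)) (m2V0 (dx ⊗ₜ[ZMod 2] dy))] at a4
  have b4 := congrArg (fun c : C => mW0 ((0 : P), c)) a4
  simp only [psplitR, Prod.mk_zero_zero, map_zero] at b4
  -- instance of R2 at (Δ2W ζ, 0)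
  have r := LinearMap.congr_fun hR2 ((Δ2W (bx ⊗ₜ[ZMod 2] by'), (0 : Q)) : C' × Q)
  simp only [LinearMap.comp_apply, LinearMap.prod_apply, Function.prod, b1VV, hS2,
    LinearMap.fst_apply] at r
  have h6C : b1V (Δ1L (Δ2W (bx ⊗ₜ[ZMod 2] by')), mV0 (Δ2W (bx ⊗ₜ[ZMod 2] by'), 0))
      + b1L (Δ2W (bx ⊗ₜ[ZMod 2] by'), b1V (Δ2W (bx ⊗ₜ[ZMod 2] by'), 0)) = 0 := by
    rw [r]; exact two_eq_zero _
  rw [psplit1 b1V (Δ1L (Δ2W (bx ⊗ₜ[ZMod 2] by'))) (mV0 (Δ2W (bx ⊗ₜ[ZMod 2] by'), 0)),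
      psplit1 b1L (Δ2W (bx ⊗ₜ[ZMod 2] by')) (b1V (Δ2W (bx ⊗ₜ[ZMod 2] by'), 0))] at h6C
  have b6 := congrArg (fun c : C => mW0 ((0 : P), c)) h6C
  simp only [psplitR, Prod.mk_zero_zero, map_zero] at b6
  -- combine
  have hsum := congrArg₂ (· + ·) (congrArg₂ (· + ·) a1 b3) (congrArg₂ (· + ·) b4 b6)
  simp only [add_zero] at hsum
  conv_rhs => rw [← hsum]
  simp only [LinearMap.prod_apply, Function.prod]
  abel_nf
  simp only [zsmul_two, nsmul_two, add_zero, zero_add]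

end LegoutStmt5
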